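/- Let ω be a weight, let f be a monic polynomial of degree d ≥ 1 with simple zeros z₁,…,z_d ordered so that z₁,…,z_{d₁} lie on the unit circle 𝕋 (d₁ ≥ 1) and z_{d₁+1},…,z_d lie in ℂ ∖ closure(𝔻). Let E be the d×d matrix with entries e_{l,m} = k_{n+d}(z_l, z_m), v₀ = (1,…,1) ∈ ℂ^d, and A_n = (A_{1,n},…,A_{d,n}) the solution of E·A_nᵗ = v₀ᵗ. Then for each 1 ≤ i ≤ d₁ there is a constant C_i, independent of n, with ∑_{k=0}^{n+d} |A_{i,n}·z̄_i^k/ω_k| ≤ C_i for all n, while for each d₁ < i ≤ d one has ∑_{k=0}^{n+d} |A_{i,n}·z̄_i^k/ω_k| → 0 as n → ∞. -/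

import Mathlib

/-!
Write `κ_b` for the coefficient vector of `k_N(·, b)` in `ℂ^{N+1}` with the weights `ω_k`, so
that `⟪κ_b, p⟫ = p(b)` whenever `deg p ≤ N`. The system `E A = 1` says that
`g = ∑ A_m κ_{z_m}` is the vector of least norm with `g(z_l) = 1` for all `l`. If the
polynomials `q_i` of degree `≤ N` satisfy `q_i(z_m) = δ_{im}`, then `A_i = ⟪q_i, g⟫`, hence
`|A_i| ≤ ‖q_i‖ ‖g‖ ≤ ‖q_i‖ ‖∑ q_m‖`. Choosing `q_i = ℓ_i · k_M(·, z_i) / k_M(z_i, z_i)` with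
`ℓ_i` the Lagrange basis and `M = N - d + 1` gives `‖q_i‖² ≲ 1 / k_M(z_i, z_i)`, so
`|A_i|² S_N k_N(z_i, z_i)` stays bounded; condition (i) forces `ω_{k+1} / ω_k → 1`, so the
shift by `d - 1` only costs a constant factor.

On `𝕋` the summed quantity is `|A_i| S_N` and `k_N(z_i, z_i) = S_N`. Off the closed disk,
`∑_{k ≤ N} |z_i|^k / ω_k ≲ |z_i|^N / ω_N ≲ (k_N(z_i, z_i) / ω_N)^{1/2}`, so the summed quantity
is `O((ω_N S_N)^{-1/2})`, and `ω_N S_N → ∞` by (ii) for nondecreasing weights and by (i) for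
nonincreasing ones.
-/

open Polynomial Filter Topology MeasureTheory Metric Asymptotics

noncomputable section

/-- A weight: positive, monotone, ω₀ = 1, ω_n/ω_{n-⌊√n⌋} → 1, ∑ 1/ω_k = ∞. -/
def IsWeight (ω : ℕ → ℝ) : Prop :=
  (∀ k, 0 < ω k) ∧ (Monotone ω ∨ Antitone ω) ∧ ω 0 = 1 ∧
    Filter.Tendsto (fun n => ω n / ω (n - Nat.sqrt n)) Filter.atTop (nhds 1) ∧
    ¬ Summable (fun k => 1 / ω k)

/-- Squared H²_ω norm of a polynomial. -/
def wNormSq (ω : ℕ → ℝ) (g : Polynomial ℂ) : ℝ :=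
  ∑ k ∈ Finset.range (g.natDegree + 1), ω k * ‖g.coeff k‖ ^ 2

/-- `p` is the n-th optimal polynomial approximant to `1/f` in `H²_ω`. -/
def IsOPA (ω : ℕ → ℝ) (f : Polynomial ℂ) (n : ℕ) (p : Polynomial ℂ) : Prop :=
  p.degree ≤ (n : ℕ) ∧ ∀ q : Polynomial ℂ, q.degree ≤ (n : ℕ) →
    wNormSq ω (1 - p * f) ≤ wNormSq ω (1 - q * f)

/-- Partial sums `S_N = ∑_{k=0}^N 1/ω_k`. -/
def S (ω : ℕ → ℝ) (N : ℕ) : ℝ := ∑ k ∈ Finset.range (N + 1), 1 / ω k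

/-- Truncated reproducing kernel `k_N(z,b) = ∑_{k=0}^N b̄^k z^k / ω_k`. -/
def kN (ω : ℕ → ℝ) (N : ℕ) (z b : ℂ) : ℂ :=
  ∑ k ∈ Finset.range (N + 1), (starRingEnd ℂ b) ^ k * z ^ k / (ω k : ℂ)

/-- Zero-counting probability measure of a polynomial: the average of Dirac
masses at its roots, counted with multiplicity. -/
def zeroMeasure (q : Polynomial ℂ) : Measure ℂ :=
  (q.natDegree : ENNReal)⁻¹ • (q.roots.map (fun z => Measure.dirac z)).sum

/-- Normalized arclength (uniform) measure on the unit circle. -/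
def nuT : Measure ℂ :=
  (ENNReal.ofReal (2 * Real.pi))⁻¹ •
    Measure.map (fun θ : ℝ => Complex.exp (θ * Complex.I))
      (MeasureTheory.volume.restrict (Set.Ioc 0 (2 * Real.pi)))

section InnerProduct

variable {𝕜 E ι : Type*} [RCLike 𝕜] [NormedAddCommGroup E] [InnerProductSpace 𝕜 E]
  [Fintype ι]

theorem norm_sum_smul_le_of_inner_eq (v : ι → E) (a : ι → 𝕜) {p : E}
    (hp : ∀ l, inner 𝕜 (v l) p = inner 𝕜 (v l) (∑ m, a m • v m)) :
    ‖∑ m, a m • v m‖ ≤ ‖p‖ := by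
  set g := ∑ m, a m • v m
  have horth : inner 𝕜 g (p - g) = 0 := by
    simp only [g, sum_inner, inner_smul_left, inner_sub_right, hp, sub_self]
  have hpyth := norm_add_sq_eq_norm_sq_add_norm_sq_of_inner_eq_zero g (p - g) horth
  rw [add_sub_cancel] at hpyth
  nlinarith [norm_nonneg g, norm_nonneg p, mul_self_nonneg ‖p - g‖]

theorem norm_le_of_biorthogonal [DecidableEq ι] (v q : ι → E) (a : ι → 𝕜)
    (hq : ∀ i m, inner 𝕜 (q i) (v m) = if i = m then 1 else 0)
    (ha : ∀ l, inner 𝕜 (v l) (∑ m, a m • v m) = 1) (i : ι) :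
    ‖a i‖ ≤ ‖q i‖ * ‖∑ m, q m‖ := by
  have hcoeff : inner 𝕜 (q i) (∑ m, a m • v m) = a i := by
    simp [inner_sum, inner_smul_right, hq]
  have hmin : ‖∑ m, a m • v m‖ ≤ ‖∑ m, q m‖ := by
    refine norm_sum_smul_le_of_inner_eq v a fun l => ?_
    rw [ha, inner_sum]
    simp [← inner_conj_symm (v l), hq]
  calc ‖a i‖ = ‖inner 𝕜 (q i) (∑ m, a m • v m)‖ := by rw [hcoeff]
    _ ≤ ‖q i‖ * ‖∑ m, a m • v m‖ := norm_inner_le_norm _ _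
    _ ≤ ‖q i‖ * ‖∑ m, q m‖ := by gcongr

end InnerProduct

def kDiag (ω : ℕ → ℝ) (r : ℝ) (N : ℕ) : ℝ := ∑ k ∈ Finset.range (N + 1), r ^ k / ω k

section kDiag

variable {ω : ℕ → ℝ}

theorem kDiag_one (N : ℕ) : kDiag ω 1 N = S ω N := by
  simp [kDiag, S]

theorem kDiag_succ (r : ℝ) (N : ℕ) :
    kDiag ω r (N + 1) = kDiag ω r N + r ^ (N + 1) / ω (N + 1) :=
  Finset.sum_range_succ _ _

theorem pow_div_le_kDiag (hω : ∀ k, 0 < ω k) {r : ℝ} (hr : 0 ≤ r) (N : ℕ) :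
    r ^ N / ω N ≤ kDiag ω r N :=
  Finset.single_le_sum (f := fun k => r ^ k / ω k)
    (fun k _ => div_nonneg (pow_nonneg hr k) (hω k).le) (Finset.self_mem_range_succ N)

theorem kDiag_pos (hω : ∀ k, 0 < ω k) {r : ℝ} (hr : 0 ≤ r) (N : ℕ) : 0 < kDiag ω r N :=
  Finset.sum_pos' (fun k _ => div_nonneg (pow_nonneg hr k) (hω k).le)
    ⟨0, Finset.mem_range.mpr N.succ_pos, by simpa using hω 0⟩

theorem S_pos (hω : ∀ k, 0 < ω k) (N : ℕ) : 0 < S ω N :=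
  kDiag_one (ω := ω) N ▸ kDiag_pos hω zero_le_one N

theorem S_le_kDiag (hω : ∀ k, 0 < ω k) {r : ℝ} (hr : 1 ≤ r) (N : ℕ) : S ω N ≤ kDiag ω r N :=
  Finset.sum_le_sum fun k _ => div_le_div_of_nonneg_right (one_le_pow₀ hr) (hω k).le

theorem kDiag_add_le (hω : ∀ k, 0 < ω k) {R r : ℝ} (hR : ∀ k, ω k ≤ R * ω (k + 1))
    (hr : 0 ≤ r) (M j : ℕ) : kDiag ω r (M + j) ≤ (1 + r * R) ^ j * kDiag ω r M := by
  have hR0 : 0 ≤ R := nonneg_of_mul_nonneg_left ((hω 0).le.trans (hR 0)) (hω 1)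
  induction j with
  | zero => simp
  | succ j ih =>
    have hlast : r ^ (M + j + 1) / ω (M + j + 1) ≤ r * R * kDiag ω r (M + j) := by
      calc r ^ (M + j + 1) / ω (M + j + 1)
          ≤ r ^ (M + j + 1) * (R / ω (M + j)) := by
            rw [div_eq_mul_inv]
            gcongr
            rw [inv_eq_one_div, div_le_div_iff₀ (hω _) (hω _)]
            linarith [hR (M + j)]
        _ = r * R * (r ^ (M + j) / ω (M + j)) := by ring
        _ ≤ r * R * kDiag ω r (M + j) := by
            gcongr
            exact pow_div_le_kDiag hω hr _
    calc kDiag ω r (M + (j + 1)) = kDiag ω r (M + j) + r ^ (M + j + 1) / ω (M + j + 1) :=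
          kDiag_succ r (M + j)
      _ ≤ (1 + r * R) * kDiag ω r (M + j) := by linarith
      _ ≤ (1 + r * R) * ((1 + r * R) ^ j * kDiag ω r M) := by gcongr
      _ = (1 + r * R) ^ (j + 1) * kDiag ω r M := by ring

theorem div_le_S_of_antitone (hω : ∀ k, 0 < ω k) (hm : Antitone ω) {j N : ℕ} (hj : j ≤ N) :
    (j + 1) / ω (N - j) ≤ S ω N := by
  calc ((j : ℝ) + 1) / ω (N - j) = ∑ _i ∈ Finset.range (j + 1), 1 / ω (N - j) := by
        simp [div_eq_mul_inv]
    _ ≤ ∑ i ∈ Finset.range (j + 1), 1 / ω (N - i) := by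
        refine Finset.sum_le_sum fun i hi => ?_
        have : i ≤ j := Nat.lt_succ_iff.mp (Finset.mem_range.mp hi)
        exact one_div_le_one_div_of_le (hω _) (hm (by omega))
    _ ≤ ∑ i ∈ Finset.range (N + 1), 1 / ω (N - i) :=
        Finset.sum_le_sum_of_subset_of_nonneg (Finset.range_subset_range.mpr (by omega))
          fun i _ _ => (one_div_pos.mpr (hω _)).le
    _ = S ω N := Finset.sum_range_reflect (fun k => 1 / ω k) (N + 1)

end kDiag

namespace IsWeight

variable {ω : ℕ → ℝ}

theorem tendsto_succ_div (hω : IsWeight ω) :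
    Tendsto (fun n => ω (n + 1) / ω n) atTop (𝓝 1) := by
  obtain ⟨hpos, hmono, -, hrat, -⟩ := hω
  have hrat' : Tendsto (fun n => ω (n + 1) / ω (n + 1 - Nat.sqrt (n + 1))) atTop (𝓝 1) :=
    hrat.comp (tendsto_add_atTop_nat 1)
  have hle : ∀ n, n + 1 - Nat.sqrt (n + 1) ≤ n := fun n => by
    have : 1 ≤ Nat.sqrt (n + 1) := Nat.le_sqrt.mpr (by omega)
    omega
  rcases hmono with hm | hm
  · refine tendsto_of_tendsto_of_tendsto_of_le_of_le tendsto_const_nhds hrat' (fun n => ?_)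
      (fun n => ?_)
    · exact (one_le_div (hpos n)).mpr (hm n.le_succ)
    · exact div_le_div_of_nonneg_left (hpos _).le (hpos _) (hm (hle n))
  · refine tendsto_of_tendsto_of_tendsto_of_le_of_le hrat' tendsto_const_nhds (fun n => ?_)
      (fun n => ?_)
    · exact div_le_div_of_nonneg_left (hpos _).le (hpos _) (hm (hle n))
    · exact (div_le_one (hpos n)).mpr (hm n.le_succ)

theorem exists_succ_le (hω : IsWeight ω) : ∃ R, ∀ k, ω (k + 1) ≤ R * ω k := by
  obtain ⟨R, hR⟩ := hω.tendsto_succ_div.bddAbove_range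
  exact ⟨R, fun k => (div_le_iff₀ (hω.1 k)).mp (hR ⟨k, rfl⟩)⟩

theorem exists_le_succ (hω : IsWeight ω) : ∃ R, ∀ k, ω k ≤ R * ω (k + 1) := by
  have h := hω.tendsto_succ_div.inv₀ one_ne_zero
  rw [inv_one] at h
  obtain ⟨R, hR⟩ := h.bddAbove_range
  refine ⟨R, fun k => ?_⟩
  have hk := hR ⟨k, rfl⟩
  simp only at hk
  rwa [inv_div, div_le_iff₀ (hω.1 _)] at hk

theorem tendsto_mul_S (hω : IsWeight ω) : Tendsto (fun N => ω N * S ω N) atTop atTop := by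
  obtain ⟨hpos, hmono, h0, hrat, hdiv⟩ := hω
  rcases hmono with hm | hm
  · have hS : Tendsto (S ω) atTop atTop :=
      ((not_summable_iff_tendsto_nat_atTop_of_nonneg fun k => (one_div_pos.mpr (hpos k)).le).mp
        hdiv).comp (tendsto_add_atTop_nat 1)
    refine tendsto_atTop_mono (fun N => ?_) hS
    have h1 : 1 ≤ ω N := h0 ▸ hm N.zero_le
    have h2 := S_pos hpos N
    nlinarith
  · have hsqrt : Tendsto (fun N => (Nat.sqrt N : ℝ) + 1) atTop atTop :=
      tendsto_atTop_add_const_right _ 1 (tendsto_natCast_atTop_atTop.comp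
        (tendsto_atTop_atTop.mpr fun b => ⟨b * b, fun a ha => Nat.le_sqrt.mpr ha⟩))
    refine tendsto_atTop_mono (fun N => ?_) (hsqrt.atTop_mul_pos one_pos hrat)
    calc ((Nat.sqrt N : ℝ) + 1) * (ω N / ω (N - Nat.sqrt N))
        = ω N * ((Nat.sqrt N + 1) / ω (N - Nat.sqrt N)) := by ring
      _ ≤ ω N * S ω N := by
        gcongr
        · exact (hpos N).le
        · exact div_le_S_of_antitone hpos hm (Nat.sqrt_le_self N)

/-- Eventually `ω_{N+1} ≤ ρ ω_N` for some `ρ < r`, and then `b_N = kDiag ω r N * ω N` obeys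
`b_{N+1} ≤ ρ b_N + r^{N+1}`. -/
theorem eventually_kDiag_mul_le (hω : IsWeight ω) {r : ℝ} (hr : 1 < r) :
    ∃ C, ∀ᶠ N in atTop, kDiag ω r N * ω N ≤ C * r ^ N := by
  have hpos := hω.1
  obtain ⟨ρ, hρ1, hρr⟩ := exists_between hr
  obtain ⟨M, hM⟩ := eventually_atTop.mp (hω.tendsto_succ_div.eventually_lt_const hρ1)
  set C := max (kDiag ω r M * ω M / r ^ M) (r / (r - ρ))
  have hrρ : 0 < r - ρ := by linarith
  have hC : r ≤ C * (r - ρ) := (div_le_iff₀ hrρ).mp (le_max_right _ _)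
  refine ⟨C, eventually_atTop.mpr ⟨M, fun N hN => ?_⟩⟩
  induction N, hN using Nat.le_induction with
  | base => exact (div_le_iff₀ (by positivity)).mp (le_max_left _ _)
  | succ N hMN ih =>
    have hstep : ω (N + 1) ≤ ρ * ω N := (div_le_iff₀ (hpos N)).mp (hM N hMN).le
    have hT := kDiag_pos hpos (by linarith : (0 : ℝ) ≤ r) N
    have hrN : 0 < r ^ N := by positivity
    calc kDiag ω r (N + 1) * ω (N + 1) = kDiag ω r N * ω (N + 1) + r ^ (N + 1) := by
          rw [kDiag_succ, add_mul, div_mul_cancel₀ _ (hpos _).ne']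
      _ ≤ ρ * (C * r ^ N) + r * r ^ N := by
          rw [pow_succ]
          nlinarith [mul_le_mul_of_nonneg_left hstep hT.le,
            mul_le_mul_of_nonneg_left ih (by linarith : (0 : ℝ) ≤ ρ)]
      _ ≤ C * r ^ (N + 1) := by
          rw [pow_succ]
          nlinarith

end IsWeight

/-- Isometric model of the degree-`N` truncation in `H²_ω` as a Euclidean space. -/
def wEmb (ω : ℕ → ℝ) (N : ℕ) : ℂ[X] →ₗ[ℂ] EuclideanSpace ℂ (Fin (N + 1)) where
  toFun p := WithLp.toLp 2 fun k => (√(ω k) : ℂ) * p.coeff k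
  map_add' p q := by ext k; simp [mul_add]
  map_smul' c p := by ext k; simp only [coeff_smul, smul_eq_mul, RingHom.id_apply,
    PiLp.smul_apply]; ring

def kpoly (ω : ℕ → ℝ) (b : ℂ) (M : ℕ) : ℂ[X] :=
  ∑ k ∈ Finset.range (M + 1), C (starRingEnd ℂ b ^ k / ω k) * X ^ k

section WeightedCoefficients

variable {ω : ℕ → ℝ}

theorem wEmb_apply (N : ℕ) (p : ℂ[X]) (k : Fin (N + 1)) :
    (wEmb ω N p).ofLp k = √(ω k) * p.coeff k := rfl

theorem norm_wEmb_sq (hω : ∀ k, 0 < ω k) (N : ℕ) (p : ℂ[X]) :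
    ‖wEmb ω N p‖ ^ 2 = ∑ k ∈ Finset.range (N + 1), ω k * ‖p.coeff k‖ ^ 2 := by
  rw [EuclideanSpace.norm_sq_eq, ← Fin.sum_univ_eq_sum_range (fun k => ω k * ‖p.coeff k‖ ^ 2)]
  congr with k
  rw [wEmb_apply, norm_mul, mul_pow, Complex.norm_real, Real.norm_eq_abs, sq_abs,
    Real.sq_sqrt (hω k).le]

theorem norm_wEmb_X_mul_le (hω : ∀ k, 0 < ω k) {R : ℝ} (hR : ∀ k, ω (k + 1) ≤ R * ω k)
    (N : ℕ) (q : ℂ[X]) : ‖wEmb ω N (X * q)‖ ≤ √R * ‖wEmb ω N q‖ := by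
  have hR0 : 0 ≤ R := nonneg_of_mul_nonneg_left ((hω 1).le.trans (hR 0)) (hω 0)
  rw [← Real.sqrt_sq (norm_nonneg (wEmb ω N q)), ← Real.sqrt_mul hR0]
  refine Real.le_sqrt_of_sq_le ?_
  rw [norm_wEmb_sq hω, norm_wEmb_sq hω, Finset.sum_range_succ', Finset.mul_sum,
    Finset.sum_range_succ _ N]
  simp only [coeff_X_mul, coeff_X_mul_zero, norm_zero]
  have hlast : 0 ≤ R * (ω N * ‖q.coeff N‖ ^ 2) := by have := hω N; positivity
  have hsum : ∑ k ∈ Finset.range N, ω (k + 1) * ‖q.coeff k‖ ^ 2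
      ≤ ∑ k ∈ Finset.range N, R * (ω k * ‖q.coeff k‖ ^ 2) :=
    Finset.sum_le_sum fun k _ => by rw [← mul_assoc]; gcongr; exact hR k
  nlinarith

theorem norm_wEmb_X_pow_mul_le (hω : ∀ k, 0 < ω k) {R : ℝ} (hR : ∀ k, ω (k + 1) ≤ R * ω k)
    (N j : ℕ) (q : ℂ[X]) : ‖wEmb ω N (X ^ j * q)‖ ≤ √R ^ j * ‖wEmb ω N q‖ := by
  induction j with
  | zero => simp
  | succ j ih =>
    calc ‖wEmb ω N (X ^ (j + 1) * q)‖ = ‖wEmb ω N (X * (X ^ j * q))‖ := by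
          rw [pow_succ', mul_assoc]
      _ ≤ √R * ‖wEmb ω N (X ^ j * q)‖ := norm_wEmb_X_mul_le hω hR N _
      _ ≤ √R * (√R ^ j * ‖wEmb ω N q‖) := by gcongr
      _ = √R ^ (j + 1) * ‖wEmb ω N q‖ := by ring

theorem norm_wEmb_mul_le (hω : ∀ k, 0 < ω k) {R : ℝ} (hR : ∀ k, ω (k + 1) ≤ R * ω k)
    (N : ℕ) (J q : ℂ[X]) :
    ‖wEmb ω N (J * q)‖
      ≤ (∑ j ∈ Finset.range (J.natDegree + 1), ‖J.coeff j‖ * √R ^ j) * ‖wEmb ω N q‖ := by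
  conv_lhs => rw [J.as_sum_range_C_mul_X_pow, Finset.sum_mul, map_sum]
  rw [Finset.sum_mul]
  refine (norm_sum_le _ _).trans (Finset.sum_le_sum fun j _ => ?_)
  rw [mul_assoc, C_mul', map_smul, norm_smul, mul_assoc]
  gcongr
  exact norm_wEmb_X_pow_mul_le hω hR N j q

theorem coeff_kpoly (b : ℂ) (M k : ℕ) :
    (kpoly ω b M).coeff k = if k ≤ M then starRingEnd ℂ b ^ k / ω k else 0 := by
  simp [kpoly]

theorem natDegree_kpoly_le (b : ℂ) (M : ℕ) : (kpoly ω b M).natDegree ≤ M :=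
  natDegree_sum_le_of_forall_le _ _ fun k hk =>
    (natDegree_C_mul_X_pow_le _ k).trans (Nat.lt_succ_iff.mp (Finset.mem_range.mp hk))

theorem eval_kpoly (b z : ℂ) (M : ℕ) : (kpoly ω b M).eval z = kN ω M z b := by
  simp only [kpoly, kN, eval_finsetSum, eval_mul, eval_C, eval_pow, eval_X]
  exact Finset.sum_congr rfl fun k _ => by ring

theorem kN_self (b : ℂ) (M : ℕ) : kN ω M b b = (kDiag ω (‖b‖ ^ 2) M : ℂ) := by
  simp only [kN, kDiag, Complex.ofReal_sum, Complex.ofReal_div, Complex.ofReal_pow]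
  refine Finset.sum_congr rfl fun k _ => ?_
  rw [← mul_pow, Complex.conj_mul']

theorem inner_wEmb_kpoly (hω : ∀ k, 0 < ω k) (b : ℂ) {N : ℕ} {p : ℂ[X]}
    (hp : p.natDegree ≤ N) : inner ℂ (wEmb ω N (kpoly ω b N)) (wEmb ω N p) = p.eval b := by
  rw [PiLp.inner_apply, eval_eq_sum_range' (Nat.lt_succ_of_le hp),
    ← Fin.sum_univ_eq_sum_range (fun k => p.coeff k * b ^ k)]
  refine Finset.sum_congr rfl fun k _ => ?_
  have hk : (√(ω k) : ℂ) * √(ω k) = ω k := by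
    rw [← Complex.ofReal_mul, Real.mul_self_sqrt (hω k).le]
  have hk0 : (ω k : ℂ) ≠ 0 := Complex.ofReal_ne_zero.mpr (hω k).ne'
  rw [RCLike.inner_apply, wEmb_apply, wEmb_apply, coeff_kpoly, if_pos (Fin.is_le k)]
  simp only [map_mul, map_div₀, map_pow, Complex.conj_conj, Complex.conj_ofReal]
  field_simp
  linear_combination (p.coeff k * b ^ (k : ℕ)) * hk

theorem inner_wEmb_kpoly_kpoly (hω : ∀ k, 0 < ω k) (z b : ℂ) (N : ℕ) :
    inner ℂ (wEmb ω N (kpoly ω z N)) (wEmb ω N (kpoly ω b N)) = kN ω N z b := by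
  rw [inner_wEmb_kpoly hω z (natDegree_kpoly_le b N), eval_kpoly]

theorem norm_wEmb_kpoly_le (hω : ∀ k, 0 < ω k) (b : ℂ) (M N : ℕ) :
    ‖wEmb ω N (kpoly ω b M)‖ ≤ √(kDiag ω (‖b‖ ^ 2) M) := by
  rw [← Real.sqrt_sq (norm_nonneg _)]
  refine Real.sqrt_le_sqrt ?_
  have hterm : ∀ k, ω k * ‖(kpoly ω b M).coeff k‖ ^ 2
      = if k ≤ M then (‖b‖ ^ 2) ^ k / ω k else 0 := fun k => by
    rw [coeff_kpoly]
    split_ifs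
    · rw [norm_div, norm_pow, Complex.norm_conj, Complex.norm_real, Real.norm_eq_abs,
        abs_of_pos (hω k)]
      field_simp [(hω k).ne']
      ring
    · simp
  rw [norm_wEmb_sq hω, Finset.sum_congr rfl fun k _ => hterm k, ← Finset.sum_filter, kDiag]
  refine Finset.sum_le_sum_of_subset_of_nonneg (fun k hk => ?_)
    fun k _ _ => div_nonneg (by positivity) (hω k).le
  simp only [Finset.mem_filter] at hk
  exact Finset.mem_range.mpr (Nat.lt_succ_of_le hk.2)

end WeightedCoefficients

/-- Damping the Lagrange basis polynomial by the normalized kernel `k_M(·, ζ m)` makes the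
weighted norm `O(k_M(ζ m, ζ m)^{-1/2})`. -/
def dualPoly (ω : ℕ → ℝ) {d : ℕ} (ζ : Fin d → ℂ) (M : ℕ) (m : Fin d) : ℂ[X] :=
  C (kN ω M (ζ m) (ζ m))⁻¹ * (Lagrange.basis Finset.univ ζ m * kpoly ω (ζ m) M)

section DualPoly

variable {ω : ℕ → ℝ} {d : ℕ} {ζ : Fin d → ℂ}

theorem eval_dualPoly (hω : ∀ k, 0 < ω k) (hζ : Function.Injective ζ) (M : ℕ) (m l : Fin d) :
    (dualPoly ω ζ M m).eval (ζ l) = if m = l then 1 else 0 := by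
  have hτ : kN ω M (ζ m) (ζ m) ≠ 0 := by
    rw [kN_self]
    exact Complex.ofReal_ne_zero.mpr (kDiag_pos hω (sq_nonneg _) M).ne'
  simp only [dualPoly, eval_mul, eval_C, eval_kpoly]
  split_ifs with h
  · subst h
    rw [Lagrange.eval_basis_self hζ.injOn (Finset.mem_univ m), one_mul, inv_mul_cancel₀ hτ]
  · rw [Lagrange.eval_basis_of_ne h (Finset.mem_univ l), zero_mul, mul_zero]

theorem natDegree_dualPoly_lt (hζ : Function.Injective ζ) (M : ℕ) (m : Fin d) :
    (dualPoly ω ζ M m).natDegree < M + d := by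
  have hJ := Lagrange.natDegree_basis hζ.injOn (Finset.mem_univ m)
  rw [Finset.card_univ, Fintype.card_fin] at hJ
  have hd := m.pos
  calc (dualPoly ω ζ M m).natDegree
      ≤ (Lagrange.basis Finset.univ ζ m * kpoly ω (ζ m) M).natDegree :=
        natDegree_C_mul_le _ _
    _ ≤ (Lagrange.basis Finset.univ ζ m).natDegree + (kpoly ω (ζ m) M).natDegree :=
        natDegree_mul_le
    _ < M + d := by have := natDegree_kpoly_le (ω := ω) (ζ m) M; omega

theorem norm_wEmb_dualPoly_mul_sqrt_le (hω : ∀ k, 0 < ω k) {R : ℝ}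
    (hR : ∀ k, ω (k + 1) ≤ R * ω k) (ζ : Fin d → ℂ) (M N : ℕ) (m : Fin d) :
    ‖wEmb ω N (dualPoly ω ζ M m)‖ * √(kDiag ω (‖ζ m‖ ^ 2) M)
      ≤ ∑ j ∈ Finset.range ((Lagrange.basis Finset.univ ζ m).natDegree + 1),
          ‖(Lagrange.basis Finset.univ ζ m).coeff j‖ * √R ^ j := by
  set τ := kDiag ω (‖ζ m‖ ^ 2) M
  set K := ∑ j ∈ Finset.range ((Lagrange.basis Finset.univ ζ m).natDegree + 1),
    ‖(Lagrange.basis Finset.univ ζ m).coeff j‖ * √R ^ j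
  have hτ : 0 < τ := kDiag_pos hω (sq_nonneg _) M
  have hK : 0 ≤ K := Finset.sum_nonneg fun j _ => by positivity
  have hmul := norm_wEmb_mul_le hω hR N (Lagrange.basis Finset.univ ζ m) (kpoly ω (ζ m) M)
  have hker := norm_wEmb_kpoly_le hω (ζ m) M N
  rw [dualPoly, C_mul', map_smul, norm_smul, kN_self, norm_inv, Complex.norm_real,
    Real.norm_eq_abs, abs_of_pos hτ]
  calc τ⁻¹ * ‖wEmb ω N (Lagrange.basis Finset.univ ζ m * kpoly ω (ζ m) M)‖ * √τ
      ≤ τ⁻¹ * (K * √τ) * √τ := by gcongr; exact hmul.trans (by gcongr)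
    _ = K := by field_simp; rw [Real.sq_sqrt hτ.le]; ring

theorem exists_norm_mul_sqrt_kDiag_le (hω : ∀ k, 0 < ω k) {R : ℝ}
    (hR : ∀ k, ω (k + 1) ≤ R * ω k)
    (hζ : Function.Injective ζ) (hζ1 : ∀ m, 1 ≤ ‖ζ m‖) (i : Fin d) :
    ∃ C, ∀ (M N : ℕ) (a : Fin d → ℂ), M + d ≤ N + 1 →
      (∀ l, ∑ m, kN ω N (ζ l) (ζ m) * a m = 1) →
      ‖a i‖ * √(kDiag ω (‖ζ i‖ ^ 2) M * S ω M) ≤ C := by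
  set K : Fin d → ℝ := fun m => ∑ j ∈ Finset.range ((Lagrange.basis Finset.univ ζ m).natDegree + 1),
    ‖(Lagrange.basis Finset.univ ζ m).coeff j‖ * √R ^ j
  refine ⟨K i * ∑ m, K m, fun M N a hMN ha => ?_⟩
  set v : Fin d → EuclideanSpace ℂ (Fin (N + 1)) := fun m => wEmb ω N (kpoly ω (ζ m) N)
  set q : Fin d → EuclideanSpace ℂ (Fin (N + 1)) := fun m => wEmb ω N (dualPoly ω ζ M m)
  have hq : ∀ i m, inner ℂ (q i) (v m) = if i = m then 1 else 0 := fun i m => by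
    rw [← inner_conj_symm, inner_wEmb_kpoly hω _ (by
      have := natDegree_dualPoly_lt (ω := ω) hζ M i; omega), eval_dualPoly hω hζ]
    split_ifs <;> simp
  have hv : ∀ l, inner ℂ (v l) (∑ m, a m • v m) = 1 := fun l => by
    simp only [v, inner_sum, inner_smul_right, inner_wEmb_kpoly_kpoly hω, ← ha l, mul_comm]
  have hqK : ∀ m, ‖q m‖ * √(S ω M) ≤ K m := fun m =>
    calc ‖q m‖ * √(S ω M) ≤ ‖q m‖ * √(kDiag ω (‖ζ m‖ ^ 2) M) := by
          gcongr
          exact S_le_kDiag hω (one_le_pow₀ (hζ1 m)) M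
      _ ≤ K m := norm_wEmb_dualPoly_mul_sqrt_le hω hR ζ M N m
  calc ‖a i‖ * √(kDiag ω (‖ζ i‖ ^ 2) M * S ω M)
      = ‖a i‖ * √(kDiag ω (‖ζ i‖ ^ 2) M) * √(S ω M) := by
        rw [Real.sqrt_mul (kDiag_pos hω (sq_nonneg _) M).le, mul_assoc]
    _ ≤ ‖q i‖ * ‖∑ m, q m‖ * √(kDiag ω (‖ζ i‖ ^ 2) M) * √(S ω M) := by
        gcongr
        exact norm_le_of_biorthogonal v q a hq hv i
    _ ≤ ‖q i‖ * (∑ m, ‖q m‖) * √(kDiag ω (‖ζ i‖ ^ 2) M) * √(S ω M) := by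
        gcongr
        exact norm_sum_le _ _
    _ = (‖q i‖ * √(kDiag ω (‖ζ i‖ ^ 2) M)) * ∑ m, ‖q m‖ * √(S ω M) := by
        rw [← Finset.sum_mul]; ring
    _ ≤ K i * ∑ m, K m :=
        mul_le_mul (norm_wEmb_dualPoly_mul_sqrt_le hω hR ζ M N i)
          (Finset.sum_le_sum fun m _ => hqK m) (by positivity) (by positivity)

end DualPoly

namespace IsWeight

variable {ω : ℕ → ℝ}

theorem exists_sq_norm_mul_S_kDiag_le (hω : IsWeight ω) {d : ℕ} {ζ : Fin d → ℂ}
    (hζ : Function.Injective ζ) (hζ1 : ∀ m, 1 ≤ ‖ζ m‖) (A : ℕ → Fin d → ℂ)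
    (hA : ∀ n l, ∑ m, kN ω (n + d) (ζ l) (ζ m) * A n m = 1) (i : Fin d) :
    ∃ C, ∀ n, ‖A n i‖ ^ 2 * (S ω (n + d) * kDiag ω (‖ζ i‖ ^ 2) (n + d)) ≤ C := by
  have hpos := hω.1
  obtain ⟨R, hR⟩ := hω.exists_succ_le
  obtain ⟨R', hR'⟩ := hω.exists_le_succ
  obtain ⟨C, hC⟩ := exists_norm_mul_sqrt_kDiag_le hpos hR hζ hζ1 i
  set r := ‖ζ i‖ ^ 2
  set W := (1 + R') ^ (d - 1) * (1 + r * R') ^ (d - 1)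
  have hR'0 : 0 ≤ R' := nonneg_of_mul_nonneg_left ((hpos 0).le.trans (hR' 0)) (hpos 1)
  have hW : 0 ≤ W := by positivity
  refine ⟨W * C ^ 2, fun n => ?_⟩
  have hN : n + d = n + 1 + (d - 1) := by have := i.pos; omega
  have hS := kDiag_add_le hpos hR' zero_le_one (n + 1) (d - 1)
  have hT := kDiag_add_le hpos hR' (sq_nonneg ‖ζ i‖) (n + 1) (d - 1)
  rw [kDiag_one, kDiag_one, one_mul, ← hN] at hS
  rw [← hN] at hT
  have hST : 0 ≤ kDiag ω r (n + 1) * S ω (n + 1) :=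
    (mul_pos (kDiag_pos hpos (sq_nonneg _) _) (S_pos hpos _)).le
  have hA2 : ‖A n i‖ ^ 2 * (kDiag ω r (n + 1) * S ω (n + 1)) ≤ C ^ 2 := by
    have h := hC (n + 1) (n + d) (A n) (by omega) (hA n)
    rw [← Real.sq_sqrt hST, ← mul_pow]
    exact pow_le_pow_left₀ (by positivity) h 2
  calc ‖A n i‖ ^ 2 * (S ω (n + d) * kDiag ω r (n + d))
      ≤ ‖A n i‖ ^ 2 * (((1 + R') ^ (d - 1) * S ω (n + 1))
          * ((1 + r * R') ^ (d - 1) * kDiag ω r (n + 1))) := by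
        have hSn := S_pos hpos (n + 1)
        gcongr ‖A n i‖ ^ 2 * ?_
        exact mul_le_mul hS hT (kDiag_pos hpos (sq_nonneg _) _).le (by positivity)
    _ = W * (‖A n i‖ ^ 2 * (kDiag ω r (n + 1) * S ω (n + 1))) := by ring
    _ ≤ W * C ^ 2 := by gcongr

theorem tendsto_mul_kDiag_nhds_zero (hω : IsWeight ω) {r : ℝ} (hr : 1 < r) {a : ℕ → ℝ}
    (ha : ∀ n, 0 ≤ a n) {N : ℕ → ℕ} (hN : Tendsto N atTop atTop) {C : ℝ}
    (h : ∀ n, a n ^ 2 * (S ω (N n) * kDiag ω (r ^ 2) (N n)) ≤ C) :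
    Tendsto (fun n => a n * kDiag ω r (N n)) atTop (𝓝 0) := by
  have hpos := hω.1
  obtain ⟨C', hC'⟩ := hω.eventually_kDiag_mul_le hr
  have hlim : Tendsto (fun n => √(C' ^ 2 * C / (ω (N n) * S ω (N n)))) atTop (𝓝 0) := by
    simpa using (tendsto_const_nhds.div_atTop (hω.tendsto_mul_S.comp hN)).sqrt
  refine squeeze_zero' (Eventually.of_forall fun n => mul_nonneg (ha n)
    (kDiag_pos hpos (by linarith) _).le) ?_ hlim
  filter_upwards [hN.eventually hC'] with n hn
  set M := N n
  have hω0 := hpos M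
  have hS0 := S_pos hpos M
  have hT : (r ^ M) ^ 2 ≤ kDiag ω (r ^ 2) M * ω M := by
    rw [← pow_mul, mul_comm, pow_mul, ← div_le_iff₀ hω0]
    exact pow_div_le_kDiag hpos (sq_nonneg r) M
  have h1 : (kDiag ω r M * ω M) ^ 2 ≤ (C' * r ^ M) ^ 2 :=
    pow_le_pow_left₀ (mul_pos (kDiag_pos hpos (by linarith) M) hω0).le hn 2
  have hsq : (a n * kDiag ω r M) ^ 2 * (ω M * S ω M) * ω M ≤ C' ^ 2 * C * ω M :=
    calc (a n * kDiag ω r M) ^ 2 * (ω M * S ω M) * ω M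
        = a n ^ 2 * S ω M * (kDiag ω r M * ω M) ^ 2 := by ring
      _ ≤ a n ^ 2 * S ω M * (C' ^ 2 * (kDiag ω (r ^ 2) M * ω M)) := by
          gcongr; nlinarith
      _ = C' ^ 2 * (a n ^ 2 * (S ω M * kDiag ω (r ^ 2) M)) * ω M := by ring
      _ ≤ C' ^ 2 * C * ω M := by gcongr; exact h n
  refine Real.le_sqrt_of_sq_le ?_
  rw [le_div_iff₀ (mul_pos hω0 hS0)]
  exact le_of_mul_le_mul_right hsq hω0

end IsWeight

theorem sum_norm_mul_conj_pow_div {ω : ℕ → ℝ} (hω : ∀ k, 0 < ω k) (a b : ℂ) (N : ℕ) :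
    ∑ k ∈ Finset.range (N + 1), ‖a * starRingEnd ℂ b ^ k / (ω k : ℂ)‖ = ‖a‖ * kDiag ω ‖b‖ N := by
  rw [kDiag, Finset.mul_sum]
  refine Finset.sum_congr rfl fun k _ => ?_
  rw [norm_div, norm_mul, norm_pow, Complex.norm_conj, Complex.norm_real, Real.norm_eq_abs,
    abs_of_pos (hω k), mul_div_assoc]

theorem A_summed_bounds_general
    (ω : ℕ → ℝ) (hω : IsWeight ω) (d d₁ : ℕ)
    (z : ℕ → ℂ) (hinj : Set.InjOn z (Set.Icc 1 d))
    (hcirc : ∀ i, 1 ≤ i → i ≤ d₁ → ‖z i‖ = 1)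
    (hout : ∀ i, d₁ < i → i ≤ d → 1 < ‖z i‖)
    (E : ℕ → Matrix (Fin d) (Fin d) ℂ)
    (hE : ∀ n, E n = Matrix.of fun (l m : Fin d) =>
      kN ω (n + d) (z ((l : ℕ) + 1)) (z ((m : ℕ) + 1)))
    (A : ℕ → Fin d → ℂ)
    (hA : ∀ n, (E n).mulVec (A n) = fun _ => 1) :
    (∀ i : Fin d, (i : ℕ) + 1 ≤ d₁ → ∃ Ci : ℝ, ∀ n,
      (∑ k ∈ Finset.range (n + d + 1),
        ‖A n i * (starRingEnd ℂ (z ((i : ℕ) + 1))) ^ k / (ω k : ℂ)‖) ≤ Ci) ∧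
    (∀ i : Fin d, d₁ < (i : ℕ) + 1 →
      Filter.Tendsto (fun n => ∑ k ∈ Finset.range (n + d + 1),
        ‖A n i * (starRingEnd ℂ (z ((i : ℕ) + 1))) ^ k / (ω k : ℂ)‖)
        Filter.atTop (nhds 0)) := by
  set ζ : Fin d → ℂ := fun m => z ((m : ℕ) + 1)
  have hζ : Function.Injective ζ := fun l m h =>
    Fin.ext (Nat.succ_injective (hinj ⟨by omega, l.isLt⟩ ⟨by omega, m.isLt⟩ h))
  have hζ1 : ∀ m, 1 ≤ ‖ζ m‖ := fun m => by
    by_cases hm : (m : ℕ) + 1 ≤ d₁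
    · exact (hcirc _ (by omega) hm).ge
    · exact (hout _ (by omega) m.isLt).le
  have hA' : ∀ n l, ∑ m, kN ω (n + d) (ζ l) (ζ m) * A n m = 1 := fun n l => by
    simpa [hE, Matrix.mulVec, dotProduct] using congrFun (hA n) l
  simp only [sum_norm_mul_conj_pow_div hω.1]
  refine ⟨fun i hi => ?_, fun i hi => ?_⟩
  · obtain ⟨C, hC⟩ := hω.exists_sq_norm_mul_S_kDiag_le hζ hζ1 A hA' i
    have hi1 : ‖ζ i‖ = 1 := hcirc _ (by omega) hi
    refine ⟨√C, fun n => Real.le_sqrt_of_sq_le ?_⟩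
    have h := hC n
    rw [hi1, one_pow, kDiag_one] at h
    rw [show ‖z ((i : ℕ) + 1)‖ = 1 from hi1, kDiag_one]
    linear_combination h
  · obtain ⟨C, hC⟩ := hω.exists_sq_norm_mul_S_kDiag_le hζ hζ1 A hA' i
    exact hω.tendsto_mul_kDiag_nhds_zero (hout _ hi i.isLt) (fun n => norm_nonneg _)
      (tendsto_add_atTop_nat d) hC

/-- Summed bounds for the coefficients `A_{i,n}`. -/
theorem A_summed_bounds
    (ω : ℕ → ℝ) (hω : IsWeight ω) (d d₁ : ℕ) (hd₁ : 1 ≤ d₁) (hd : d₁ ≤ d)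
    (z : ℕ → ℂ) (hinj : Set.InjOn z (Set.Icc 1 d))
    (hcirc : ∀ i, 1 ≤ i → i ≤ d₁ → ‖z i‖ = 1)
    (hout : ∀ i, d₁ < i → i ≤ d → 1 < ‖z i‖)
    (f : Polynomial ℂ)
    (hf : f = ∏ i ∈ Finset.Icc 1 d, (Polynomial.X - Polynomial.C (z i)))
    (E : ℕ → Matrix (Fin d) (Fin d) ℂ)
    (hE : ∀ n, E n = Matrix.of fun (l m : Fin d) =>
      kN ω (n + d) (z ((l : ℕ) + 1)) (z ((m : ℕ) + 1)))
    (A : ℕ → Fin d → ℂ)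
    (hA : ∀ n, (E n).mulVec (A n) = fun _ => 1) :
    (∀ i : Fin d, (i : ℕ) + 1 ≤ d₁ → ∃ Ci : ℝ, ∀ n,
      (∑ k ∈ Finset.range (n + d + 1),
        ‖A n i * (starRingEnd ℂ (z ((i : ℕ) + 1))) ^ k / (ω k : ℂ)‖) ≤ Ci) ∧
    (∀ i : Fin d, d₁ < (i : ℕ) + 1 →
      Filter.Tendsto (fun n => ∑ k ∈ Finset.range (n + d + 1),
        ‖A n i * (starRingEnd ℂ (z ((i : ℕ) + 1))) ^ k / (ω k : ℂ)‖)
        Filter.atTop (nhds 0)) :=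
  A_summed_bounds_general ω hω d d₁ z hinj hcirc hout E hE A hA
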